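/- The directional derivative of the matrix exponential satisfies the integral formula: for p×p real matrices A and B, d/dε exp(A + εB)|_{ε=0} = ∫₀¹ exp((1−u)A) · B · exp(uA) du. -/

import Mathlib

attribute [local instance] Matrix.linftyOpNormedAddCommGroup Matrix.linftyOpNormedSpace

open NormedSpace

/-!
Duhamel's formula: differentiating `u ↦ exp ((1 - u) • A) * exp (u • N)` and integrating over
`[0, 1]` gives `exp N - exp A = ∫₀¹ exp ((1 - u) • A) * (N - A) * exp (u • N) du`.
For `N = A + ε • B` this writes `exp (A + ε • B) - exp A` as `ε` times an integral that depends
continuously on `ε`, and its value at `ε = 0` is the derivative.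
-/

open Filter Topology in
theorem hasDerivAt_of_sub_eq_smul {𝕜 E : Type*} [NontriviallyNormedField 𝕜]
    [NormedAddCommGroup E] [NormedSpace 𝕜 E] {f g : 𝕜 → E} {a : 𝕜}
    (hfg : ∀ x, f x - f a = (x - a) • g x) (hg : ContinuousAt g a) :
    HasDerivAt f (g a) a := by
  rw [hasDerivAt_iff_tendsto_slope]
  refine (hg.tendsto.mono_left nhdsWithin_le_nhds).congr' ?_
  filter_upwards [self_mem_nhdsWithin] with x hx
  rw [slope_def_module, hfg, smul_smul, inv_mul_cancel₀ (sub_ne_zero.2 hx), one_smul]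

section BanachAlgebra

variable {𝔸 : Type*} [NormedRing 𝔸] [NormedAlgebra ℝ 𝔸] [CompleteSpace 𝔸]

theorem continuous_exp_real : Continuous (exp : 𝔸 → 𝔸) :=
  continuous_iff_continuousAt.2 fun x => (exp_analytic (𝕂 := ℝ) x).continuousAt

theorem hasDerivAt_exp_one_sub_smul (A : 𝔸) (u : ℝ) :
    HasDerivAt (fun u : ℝ => exp ((1 - u) • A)) (-(exp ((1 - u) • A) * A)) u := by
  simpa [Function.comp_def] using
    (hasDerivAt_exp_smul_const A (1 - u)).scomp u ((hasDerivAt_id u).const_sub 1)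

theorem exp_sub_exp_eq_intervalIntegral (A N : 𝔸) :
    exp N - exp A = ∫ u in (0:ℝ)..1, exp ((1 - u) • A) * (N - A) * exp (u • N) := by
  have hderiv : ∀ u ∈ Set.uIcc (0:ℝ) 1,
      HasDerivAt (fun u : ℝ => exp ((1 - u) • A) * exp (u • N))
        (exp ((1 - u) • A) * (N - A) * exp (u • N)) u := by
    intro u _
    refine ((hasDerivAt_exp_one_sub_smul A u).mul (hasDerivAt_exp_smul_const' N u)).congr_deriv ?_
    rw [mul_sub, sub_mul, neg_mul, mul_assoc, mul_assoc, neg_add_eq_sub]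
  have hcont : Continuous fun u : ℝ => exp ((1 - u) • A) * (N - A) * exp (u • N) := by
    have := continuous_exp_real (𝔸 := 𝔸)
    fun_prop
  rw [intervalIntegral.integral_eq_sub_of_hasDerivAt hderiv (hcont.intervalIntegrable 0 1)]
  simp

theorem exp_add_smul_sub_exp (A B : 𝔸) (ε : ℝ) :
    exp (A + ε • B) - exp A
      = ε • ∫ u in (0:ℝ)..1, exp ((1 - u) • A) * B * exp (u • (A + ε • B)) := by
  rw [exp_sub_exp_eq_intervalIntegral, add_sub_cancel_left, ← intervalIntegral.integral_smul]
  simp only [mul_smul_comm, smul_mul_assoc]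

theorem hasDerivAt_exp_add_smul (A B : 𝔸) :
    HasDerivAt (fun ε : ℝ => exp (A + ε • B))
      (∫ u in (0:ℝ)..1, exp ((1 - u) • A) * B * exp (u • A)) 0 := by
  have hcont : Continuous fun ε : ℝ =>
      ∫ u in (0:ℝ)..1, exp ((1 - u) • A) * B * exp (u • (A + ε • B)) := by
    have := continuous_exp_real (𝔸 := 𝔸)
    apply intervalIntegral.continuous_parametric_intervalIntegral_of_continuous'
    fun_prop
  refine (hasDerivAt_of_sub_eq_smul (fun ε => ?_) hcont.continuousAt).congr_deriv (by simp)
  rw [zero_smul, add_zero, sub_zero]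
  exact exp_add_smul_sub_exp A B ε

end BanachAlgebra

/-- Directional derivative of the matrix exponential:
`d/dε exp(A + εB)|_{ε=0} = ∫₀¹ exp((1−u)A) · B · exp(uA) du`. -/
theorem deriv_matrix_exp {p : ℕ} (A B : Matrix (Fin p) (Fin p) ℝ) :
    HasDerivAt (fun ε : ℝ => exp (A + ε • B))
      (∫ u in (0:ℝ)..1, exp ((1 - u) • A) * B * exp (u • A)) 0 := by
  let : NormedRing (Matrix (Fin p) (Fin p) ℝ) := Matrix.linftyOpNormedRing
  let : NormedAlgebra ℝ (Matrix (Fin p) (Fin p) ℝ) := Matrix.linftyOpNormedAlgebra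
  exact hasDerivAt_exp_add_smul A B
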